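/- arXiv:1606.05722 — 3 statements merged into one kernel-verified Lean document; each statement's English description precedes it below -/
import Mathlib

section
/- Let 2 ≤ r ≤ n be integers and let (s₂, …, s_r) be a fixed (r−1)-tuple of positive integers. Then there exists an integer M (depending on (s₂, …, s_r) and n) such that for every positive integer s₁ > M, the multiple harmonic sum H_n(s₁, s₂, …, s_r) is not an integer. -/
/-!
Write `x_k = 1/k₁`. Each term of `H_n(s₁, s₂, …, s_r)` has the form `c_k x_k^{s₁}` with `c_k > 0`
independent of `s₁`, so as `s₁ → ∞` the sum tends to `A = ∑_{k₁ = 1} c_k`. If `n > r`, some tuple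
has `k₁ = 2`, so the sum stays strictly above `A` and eventually lies in `(⌊A⌋, ⌊A⌋ + 1)`.
If `n = r`, the only tuple is `(1, 2, …, r)` and the sum is `∏_{i ≥ 2} i^{-s_i} ∈ (0, 1)`.
-/

/-- The multiple harmonic sum
`H_n(s₁, …, s_r) = ∑_{1 ≤ k₁ < ⋯ < k_r ≤ n} 1/(k₁^{s₁} ⋯ k_r^{s_r})`. -/
def mhs (n r : ℕ) (s : Fin r → ℕ) : ℚ :=
  ∑ k ∈ Finset.univ.filter (fun k : Fin r → Fin n => ∀ i j : Fin r, i < j → k i < k j),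
    ∏ i, (1 : ℚ) / ((k i : ℕ) + 1 : ℚ) ^ s i

open Filter Topology Finset

section PowerSums

variable {ι 𝕜 : Type*} [Field 𝕜] [LinearOrder 𝕜] [IsStrictOrderedRing 𝕜]
  (T : Finset ι) (c x : ι → 𝕜)

theorem tendsto_sum_mul_pow [Archimedean 𝕜] [TopologicalSpace 𝕜] [OrderTopology 𝕜]
    (hx₀ : ∀ i ∈ T, 0 ≤ x i) (hx₁ : ∀ i ∈ T, x i ≤ 1) :
    Tendsto (fun s : ℕ => ∑ i ∈ T, c i * x i ^ s) atTop (𝓝 (∑ i ∈ T with x i = 1, c i)) := by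
  rw [sum_filter]
  refine tendsto_finsetSum _ fun i hi => ?_
  split_ifs with h
  · simp [h]
  · simpa using ((tendsto_pow_atTop_nhds_zero_of_lt_one (hx₀ i hi)
      ((hx₁ i hi).lt_of_ne h)).const_mul (c i))

theorem sum_filter_lt_sum_mul_pow (hc : ∀ i ∈ T, 0 < c i) (hx : ∀ i ∈ T, 0 < x i)
    {j : ι} (hj : j ∈ T) (hxj : x j ≠ 1) (s : ℕ) :
    ∑ i ∈ T with x i = 1, c i < ∑ i ∈ T, c i * x i ^ s := by
  rw [← sum_filter_add_sum_filter_not T (fun i => x i = 1)]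
  have h_one : ∑ i ∈ T with x i = 1, c i * x i ^ s = ∑ i ∈ T with x i = 1, c i :=
    sum_congr rfl fun i hi => by simp [(mem_filter.1 hi).2]
  have h_rest : 0 < ∑ i ∈ T with x i ≠ 1, c i * x i ^ s :=
    sum_pos (fun i hi => mul_pos (hc i (mem_filter.1 hi).1) (pow_pos (hx i (mem_filter.1 hi).1) s))
      ⟨j, mem_filter.2 ⟨hj, hxj⟩⟩
  linarith

end PowerSums

theorem not_exists_intCast_eq_of_lt_of_lt {R : Type*} [Ring R] [LinearOrder R]
    [IsStrictOrderedRing R] {a : R} {m : ℤ} (h₀ : m < a) (h₁ : a < m + 1) :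
    ¬∃ z : ℤ, a = z := by
  rintro ⟨z, rfl⟩
  have : m < z := mod_cast h₀
  have : z < m + 1 := mod_cast h₁
  omega

theorem eventually_not_exists_intCast_eq {α R : Type*} [Ring R] [LinearOrder R]
    [IsStrictOrderedRing R] [FloorRing R] [TopologicalSpace R] [OrderTopology R]
    {l : Filter α} {f : α → R} {a : R} (hf : Tendsto f l (𝓝 a)) (hfa : ∀ᶠ t in l, a < f t) :
    ∀ᶠ t in l, ¬∃ z : ℤ, f t = z := by
  filter_upwards [hfa, hf.eventually (gt_mem_nhds (Int.lt_floor_add_one a))] with t h₀ h₁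
  exact not_exists_intCast_eq_of_lt_of_lt ((Int.floor_le a).trans_lt h₀) h₁

/-- The index set of `mhs n r`; `k i` encodes `k_{i+1} - 1`. -/
def increasingTuples (r n : ℕ) : Finset (Fin r → Fin n) :=
  univ.filter fun k => ∀ i j : Fin r, i < j → k i < k j

theorem mem_increasingTuples {r n : ℕ} {k : Fin r → Fin n} :
    k ∈ increasingTuples r n ↔ StrictMono k := by
  simp [increasingTuples, StrictMono]

theorem increasingTuples_self (r : ℕ) : increasingTuples r r = {id} := by
  ext k
  rw [mem_increasingTuples, mem_singleton]
  exact ⟨StrictMono.eq_id, fun h => h ▸ strictMono_id⟩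

theorem mhs_cons_eq_sum_mul_pow (n r s₁ : ℕ) (s' : Fin r → ℕ) :
    mhs n (r + 1) (Fin.cons s₁ s') =
      ∑ k ∈ increasingTuples (r + 1) n,
        (∏ i : Fin r, 1 / ((k i.succ : ℕ) + 1 : ℚ) ^ s' i) * (1 / ((k 0 : ℕ) + 1 : ℚ)) ^ s₁ := by
  refine sum_congr rfl fun k _ => ?_
  rw [Fin.prod_univ_succ, Fin.cons_zero, div_pow, one_pow, mul_comm]
  simp only [Fin.cons_succ]

theorem mhs_cons_self_pos_lt_one {r : ℕ} (hr : 1 ≤ r) (s₁ : ℕ) (s' : Fin r → ℕ)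
    (hs' : ∀ i, 0 < s' i) :
    0 < mhs (r + 1) (r + 1) (Fin.cons s₁ s') ∧ mhs (r + 1) (r + 1) (Fin.cons s₁ s') < 1 := by
  obtain ⟨r, rfl⟩ := Nat.exists_eq_add_of_le' hr
  rw [mhs_cons_eq_sum_mul_pow, increasingTuples_self, sum_singleton]
  simp only [id, Fin.val_zero, Nat.cast_zero, zero_add, div_one, one_pow, mul_one]
  refine ⟨by positivity, ?_⟩
  rw [Fin.prod_univ_succ]
  refine mul_lt_one_of_nonneg_of_lt_one_left (by positivity) ?_ ?_
  · rw [div_lt_one (by positivity)]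
    exact one_lt_pow₀ (by norm_num) (hs' 0).ne'
  · refine prod_le_one (fun i _ => by positivity) fun i _ => ?_
    rw [div_le_one (by positivity)]
    exact one_le_pow₀ (le_add_of_nonneg_left (by positivity))

/-- Given a length `r + 1 ≥ 2`, an `n ≥ r + 1`, and a fixed tail `(s₂, …, s_{r+1})` of
positive integers, there is an integer `M` such that for every positive integer
`s₁ > M` the multiple harmonic sum `H_n(s₁, s₂, …, s_{r+1})` is not an integer. -/
theorem exists_bound_first_exponent (r n : ℕ) (hr : 1 ≤ r) (hn : r + 1 ≤ n)
    (s' : Fin r → ℕ) (hs' : ∀ i, 0 < s' i) :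
    ∃ M : ℤ, ∀ s₁ : ℕ, 0 < s₁ → M < (s₁ : ℤ) →
      ¬∃ m : ℤ, mhs n (r + 1) (Fin.cons s₁ s') = (m : ℚ) := by
  rcases hn.eq_or_lt with rfl | hn
  · refine ⟨0, fun s₁ _ _ => ?_⟩
    obtain ⟨h₀, h₁⟩ := mhs_cons_self_pos_lt_one hr s₁ s' hs'
    exact not_exists_intCast_eq_of_lt_of_lt (m := 0) (mod_cast h₀) (by simpa using h₁)
  set c : (Fin (r + 1) → Fin n) → ℚ := fun k => ∏ i : Fin r, 1 / ((k i.succ : ℕ) + 1 : ℚ) ^ s' i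
  set x : (Fin (r + 1) → Fin n) → ℚ := fun k => 1 / ((k 0 : ℕ) + 1 : ℚ)
  have hc : ∀ k ∈ increasingTuples (r + 1) n, 0 < c k := fun k _ => by positivity
  have hx : ∀ k ∈ increasingTuples (r + 1) n, 0 < x k := fun k _ => by positivity
  have hx₁ : ∀ k ∈ increasingTuples (r + 1) n, x k ≤ 1 := fun k _ =>
    div_le_one_of_le₀ (le_add_of_nonneg_left (by positivity)) (by positivity)
  -- `k = (2, 3, …, r + 2)` has `x k = 1/2`.
  set k₂ : Fin (r + 1) → Fin n := fun i => Fin.castLE hn i.succ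
  have hk₂ : k₂ ∈ increasingTuples (r + 1) n :=
    mem_increasingTuples.2 ((Fin.strictMono_castLE hn).comp Fin.strictMono_succ)
  have hxk₂ : x k₂ ≠ 1 := by norm_num [x, k₂]
  obtain ⟨N, hN⟩ := eventually_atTop.1 <| eventually_not_exists_intCast_eq
    (tendsto_sum_mul_pow _ c x (fun k hk => (hx k hk).le) hx₁)
    (Eventually.of_forall (sum_filter_lt_sum_mul_pow _ c x hc hx hk₂ hxk₂))
  refine ⟨N, fun s₁ _ hs₁ => ?_⟩
  rw [mhs_cons_eq_sum_mul_pow]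
  exact hN s₁ (by omega)
end

section
/- Let 2 ≤ r < n be integers, let (s₂, …, s_r) be positive integers, and for 1 ≤ k ≤ n−r+1 set c_k = Σ_{k < k₂ < ⋯ < k_r ≤ n} 1/(k₂^{s₂} ⋯ k_r^{s_r}). Let p be the largest prime with p ≤ n−r+1, and set M = max( ν_p(c_p), ν_p(c_p) − min_{1≤k≤n−r+1, k≠p} ν_p(c_k) ). Then for every positive integer s₁ > M, the p-adic valuation of H_n(s₁, …, s_r) equals ν_p(c_p) − s₁ and is negative; in particular H_n(s₁, …, s_r) is not an integer. -/
/-- `c_k = ∑_{k < k₂ < ⋯ < k_r ≤ n} 1/(k₂^{s₂} ⋯ k_r^{s_r})`, the inner sum of the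
multiple harmonic sum, where the tail `(k₂,…,k_r)` has `r` entries with exponents `s'`. -/
def cval (n r : ℕ) (s' : Fin r → ℕ) (k : ℕ) : ℚ :=
  ∑ kk ∈ Finset.univ.filter (fun kk : Fin r → Fin n =>
      (∀ i j : Fin r, i < j → kk i < kk j) ∧ ∀ i, k ≤ (kk i : ℕ)),
    ∏ i, (1 : ℚ) / ((kk i : ℕ) + 1 : ℚ) ^ s' i

/-!
Splitting off the first index gives `H_n(s₁, …) = ∑_{k=1}^{n-r} c_k / k^{s₁}`. By Bertrand's
postulate `n - r < 2p`, so `p` is the only multiple of `p` in `[1, n - r]`: the term `k = p` has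
valuation `ν_p(c_p) - s₁`, every other term has valuation `ν_p(c_k)`, and `s₁ > M` makes the
term `k = p` the unique term of least valuation, which therefore is the valuation of the sum.
-/

lemma cval_pos (n r : ℕ) (s' : Fin r → ℕ) {m : ℕ} (h : m + r ≤ n) : 0 < cval n r s' m := by
  refine Finset.sum_pos (fun kk _ => Finset.prod_pos fun i _ => by positivity)
    ⟨fun i => ⟨m + i, by omega⟩, ?_⟩
  simp only [Finset.mem_filter, Finset.mem_univ, true_and]
  exact ⟨fun i j hij => Nat.add_lt_add_left hij m, fun i => Nat.le_add_right m i⟩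

lemma cval_eq_zero (n r : ℕ) (s' : Fin r → ℕ) {m : ℕ} (h : n - m < r) : cval n r s' m = 0 := by
  refine Finset.sum_eq_zero fun kk hkk => absurd ?_ h.not_ge
  simp only [Finset.mem_filter, Finset.mem_univ, true_and] at hkk
  obtain ⟨hmono, hge⟩ := hkk
  have hmaps : ∀ i ∈ (Finset.univ : Finset (Fin r)), (kk i : ℕ) ∈ Finset.Ico m n :=
    fun i _ => Finset.mem_Ico.mpr ⟨hge i, (kk i).isLt⟩
  simpa using Finset.card_le_card_of_injOn _ hmaps
    fun i _ j _ hij => StrictMono.injective hmono (Fin.ext hij)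

lemma mhs_cons (n r s₁ : ℕ) (s' : Fin r → ℕ) :
    mhs n (r + 1) (Fin.cons s₁ s') =
      ∑ a : Fin n, cval n r s' ((a : ℕ) + 1) / ((a : ℕ) + 1 : ℚ) ^ s₁ := by
  rw [mhs, Finset.sum_filter, ← (Fin.consEquiv fun _ => Fin n).sum_comp, Fintype.sum_prod_type]
  refine Finset.sum_congr rfl fun a _ => ?_
  rw [cval, Finset.sum_filter, Finset.sum_div]
  refine Finset.sum_congr rfl fun t _ => ?_
  have hcons : StrictMono (Fin.cons a t : Fin (r + 1) → Fin n) ↔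
      StrictMono t ∧ ∀ i, (a : ℕ) + 1 ≤ t i :=
    Fin.strictMono_cons.trans and_comm
  simp only [Fin.consEquiv_apply, Fin.prod_univ_succ, Fin.cons_zero, Fin.cons_succ]
  split_ifs with hmono hmono' hmono'
  · ring
  · exact absurd (hcons.mp hmono) hmono'
  · exact absurd (hcons.mpr hmono') hmono
  · rw [zero_div]

lemma mhs_cons_eq_sum_Icc (n r s₁ : ℕ) (s' : Fin r → ℕ) :
    mhs n (r + 1) (Fin.cons s₁ s') =
      ∑ k ∈ Finset.Icc 1 (n - r), cval n r s' k / (k : ℚ) ^ s₁ := by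
  have hshift : mhs n (r + 1) (Fin.cons s₁ s') =
      ∑ k ∈ Finset.Icc 1 n, cval n r s' k / (k : ℚ) ^ s₁ := by
    rw [mhs_cons, Fin.sum_univ_eq_sum_range (fun a => cval n r s' (a + 1) / ((a : ℚ) + 1) ^ s₁),
      ← Finset.Ico_add_one_right_eq_Icc, Finset.sum_Ico_eq_sum_range, Nat.add_sub_cancel]
    refine Finset.sum_congr rfl fun a _ => ?_
    rw [add_comm 1 a]
    push_cast
    rfl
  rw [hshift]
  refine (Finset.sum_subset (Finset.Icc_subset_Icc_right (Nat.sub_le n r)) fun k hk hk' => ?_).symm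
  rw [Finset.mem_Icc] at hk hk'
  rw [cval_eq_zero n r s' (by omega), zero_div]

lemma padicValRat_lt_sum_of_lt {p : ℕ} [Fact p.Prime] {ι : Type*} {S : Finset ι} {F : ι → ℚ}
    {q : ℚ} (hS : S.Nonempty) (hpos : ∀ i ∈ S, 0 < F i)
    (hlt : ∀ i ∈ S, padicValRat p q < padicValRat p (F i)) :
    padicValRat p q < padicValRat p (∑ i ∈ S, F i) := by
  induction hS using Finset.Nonempty.cons_induction with
  | singleton a => simpa using hlt a
  | cons a S ha hS ih =>
    rw [Finset.sum_cons]
    simp only [Finset.mem_cons, forall_eq_or_imp] at hpos hlt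
    exact padicValRat.lt_add_of_lt (add_pos hpos.1 (Finset.sum_pos hpos.2 hS)).ne' hlt.1
      (ih hpos.2 hlt.2)

lemma padicValRat_sum_eq_of_lt {p : ℕ} [Fact p.Prime] {ι : Type*} [DecidableEq ι]
    {S : Finset ι} {F : ι → ℚ} {a : ι} (ha : a ∈ S) (hpos : ∀ i ∈ S, 0 < F i)
    (hlt : ∀ i ∈ S.erase a, padicValRat p (F a) < padicValRat p (F i)) :
    padicValRat p (∑ i ∈ S, F i) = padicValRat p (F a) := by
  have hpos' : ∀ i ∈ S.erase a, 0 < F i := fun i hi => hpos i (Finset.mem_of_mem_erase hi)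
  rw [← Finset.add_sum_erase S F ha]
  rcases (S.erase a).eq_empty_or_nonempty with hS | hS
  · rw [hS, Finset.sum_empty, add_zero]
  · have hrest := Finset.sum_pos hpos' hS
    exact padicValRat.add_eq_of_lt (add_pos (hpos a ha) hrest).ne' (hpos a ha).ne' hrest.ne'
      (padicValRat_lt_sum_of_lt hS hpos' hlt)

lemma padicValRat_div_self_pow {p : ℕ} [Fact p.Prime] {c : ℚ} (hc : c ≠ 0) (s : ℕ) :
    padicValRat p (c / (p : ℚ) ^ s) = padicValRat p c - s := by
  rw [div_eq_mul_inv, padicValRat.mul hc (by simp [(Fact.out : p.Prime).ne_zero]),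
    padicValRat.self_pow_inv, sub_eq_add_neg]

lemma padicValRat_div_pow_of_not_dvd {p : ℕ} [Fact p.Prime] {c : ℚ} (hc : c ≠ 0) {k : ℕ}
    (hk : ¬p ∣ k) (s : ℕ) : padicValRat p (c / (k : ℚ) ^ s) = padicValRat p c := by
  have hk₀ : (k : ℚ) ≠ 0 := Nat.cast_ne_zero.mpr fun h => hk (h ▸ dvd_zero p)
  rw [padicValRat.div hc (pow_ne_zero s hk₀), padicValRat.pow, padicValRat.of_nat,
    padicValNat.eq_zero_of_not_dvd hk, Nat.cast_zero, mul_zero, sub_zero]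

lemma Nat.lt_two_mul_of_forall_prime_le {N p : ℕ} (hp : p.Prime)
    (hmax : ∀ q : ℕ, q.Prime → q ≤ N → q ≤ p) : N < 2 * p := by
  by_contra! hN
  obtain ⟨q, hq, hpq, hq2⟩ := Nat.exists_prime_lt_and_le_two_mul p hp.ne_zero
  exact (hmax q hq (hq2.trans hN)).not_gt hpq

lemma Nat.not_dvd_of_pos_of_lt_two_mul {p k : ℕ} (hk₀ : 0 < k) (hk : k < 2 * p) (hkp : k ≠ p) :
    ¬p ∣ k := by
  rintro ⟨c, rfl⟩
  have hc : c < 2 := Nat.lt_of_mul_lt_mul_left (a := p) (by linarith)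
  interval_cases c <;> simp_all

/-- Let the full length be `r + 1` with `2 ≤ r + 1 < n`, let `p` be the largest prime
`≤ n − (r+1) + 1 = n − r`, and let
`M = max(ν_p(c_p), ν_p(c_p) − min_{1 ≤ k ≤ n−r, k ≠ p} ν_p(c_k))`.
Then for every positive integer `s₁ > M`, `ν_p(H_n(s₁,…)) = ν_p(c_p) − s₁ < 0`;
in particular `H_n(s₁, s₂, …)` is not an integer. -/
theorem padicValRat_mhs_of_large_first_exponent (r n p : ℕ) (hn : r + 2 ≤ n)
    (s' : Fin r → ℕ)
    (hp : p.Prime) (hpn : p ≤ n - r)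
    (hpmax : ∀ q : ℕ, q.Prime → q ≤ n - r → q ≤ p)
    (s₁ : ℕ)
    (hM : max (padicValRat p (cval n r s' p))
        (padicValRat p (cval n r s' p) -
          ((Finset.Icc 1 (n - r)).erase p).inf'
            ⟨1, Finset.mem_erase.mpr
              ⟨Nat.ne_of_lt hp.one_lt, Finset.mem_Icc.mpr ⟨le_refl 1, by omega⟩⟩⟩
            (fun k => padicValRat p (cval n r s' k)))
      < (s₁ : ℤ)) :
    padicValRat p (mhs n (r + 1) (Fin.cons s₁ s')) =
      padicValRat p (cval n r s' p) - (s₁ : ℤ) ∧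
    padicValRat p (mhs n (r + 1) (Fin.cons s₁ s')) < 0 ∧
    ¬∃ m : ℤ, mhs n (r + 1) (Fin.cons s₁ s') = (m : ℚ) := by
  have : Fact p.Prime := ⟨hp⟩
  have hN : n - r < 2 * p := Nat.lt_two_mul_of_forall_prime_le hp hpmax
  have hcval_pos : ∀ k ∈ Finset.Icc 1 (n - r), 0 < cval n r s' k := fun k hk =>
    cval_pos n r s' (by rw [Finset.mem_Icc] at hk; omega)
  have hpIcc : p ∈ Finset.Icc 1 (n - r) := Finset.mem_Icc.mpr ⟨hp.pos, hpn⟩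
  have hval : padicValRat p (mhs n (r + 1) (Fin.cons s₁ s')) =
      padicValRat p (cval n r s' p) - s₁ := by
    rw [mhs_cons_eq_sum_Icc, padicValRat_sum_eq_of_lt hpIcc,
      padicValRat_div_self_pow (hcval_pos p hpIcc).ne']
    · exact fun k hk =>
        div_pos (hcval_pos k hk) (pow_pos (Nat.cast_pos.mpr (Finset.mem_Icc.mp hk).1) _)
    · intro k hk
      obtain ⟨hkp, hkIcc⟩ := Finset.mem_erase.mp hk
      have hk_not_dvd : ¬p ∣ k := Nat.not_dvd_of_pos_of_lt_two_mul
        (Finset.mem_Icc.mp hkIcc).1 ((Finset.mem_Icc.mp hkIcc).2.trans_lt hN) hkp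
      rw [padicValRat_div_self_pow (hcval_pos p hpIcc).ne',
        padicValRat_div_pow_of_not_dvd (hcval_pos k hkIcc).ne' hk_not_dvd]
      have := Finset.inf'_le (fun k => padicValRat p (cval n r s' k)) hk
      omega
  have hneg : padicValRat p (mhs n (r + 1) (Fin.cons s₁ s')) < 0 := by
    rw [hval]
    omega
  refine ⟨hval, hneg, ?_⟩
  rintro ⟨m, hm⟩
  rw [hm, padicValRat.of_int] at hneg
  exact hneg.not_ge (Int.natCast_nonneg _)
end

section
/- Let 2 ≤ r < n be integers and (s₂, …, s_r) positive integers, and for 1 ≤ k ≤ n−r+1 set c_k = Σ_{k < k₂ < ⋯ < k_r ≤ n} 1/(k₂^{s₂} ⋯ k_r^{s_r}). Suppose p is a prime with n/2 < p ≤ n−r+1 and p is the largest prime ≤ n−r+1. Then for every positive integer s₁ > ν_p(c_p) + max_{2≤i≤r} s_i, the multiple harmonic sum H_n(s₁, s₂, …, s_r) is not an integer. -/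
/-!
Since `n < 2p`, the only multiple of `p` in `1, …, n` is `p` itself. Split `H_n(s₁, …, s_r)`
according to whether `k₁ = p`. The terms with `k₁ = p` add up to `p^{-s₁} c_p`, whose `p`-adic
valuation `ν_p(c_p) - s₁` is `< -max sᵢ`. Every other term contains the factor `p` at most
once, as some `kᵢ` with `i ≥ 2`, so its valuation is `≥ -max sᵢ`. Hence
`ν_p(H_n) = ν_p(c_p) - s₁ < 0`.
-/

open Finset

/-- Indices are shifted: `k i : Fin n` stands for the integer `k i + 1 ∈ [1, n]`. -/
def mhsTerm {r n : ℕ} (s : Fin r → ℕ) (k : Fin r → Fin n) : ℚ :=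
  ∏ i, (1 : ℚ) / ((k i : ℕ) + 1 : ℚ) ^ s i

lemma mhs_eq_sum_mhsTerm (n r : ℕ) (s : Fin r → ℕ) :
    mhs n r s = ∑ k ∈ univ.filter (fun k : Fin r → Fin n => ∀ a b, a < b → k a < k b),
      mhsTerm s k := rfl

lemma mhsTerm_pos {r n : ℕ} (s : Fin r → ℕ) (k : Fin r → Fin n) : 0 < mhsTerm s k :=
  prod_pos fun _ _ => by positivity

lemma mhsTerm_cons {r n : ℕ} (s₁ : ℕ) (s : Fin r → ℕ) (k : Fin (r + 1) → Fin n) :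
    mhsTerm (Fin.cons s₁ s) k = 1 / ((k 0 : ℕ) + 1 : ℚ) ^ s₁ * mhsTerm s (Fin.tail k) := by
  simp only [mhsTerm, Fin.prod_univ_succ, Fin.cons_zero, Fin.cons_succ, Fin.tail]

lemma padicValRat_mhsTerm (p : ℕ) [Fact p.Prime] {r n : ℕ} (s : Fin r → ℕ)
    (k : Fin r → Fin n) :
    padicValRat p (mhsTerm s k) = -(∑ i, s i * padicValNat p ((k i : ℕ) + 1) : ℕ) := by
  have hterm : mhsTerm s k = ((∏ i, ((k i : ℕ) + 1) ^ s i : ℕ) : ℚ)⁻¹ := by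
    simp [mhsTerm, prod_inv_distrib]
  rw [hterm, padicValRat.inv, padicValRat.of_nat, ← Nat.factorization_def _ Fact.out,
    Nat.factorization_prod fun i _ => by positivity, Finsupp.finsetSum_apply]
  simp [Nat.factorization_pow, Nat.factorization_def _ (Fact.out : p.Prime)]

lemma padicValNat_eq_zero_of_lt_two_mul {p m : ℕ} [Fact p.Prime] (hm0 : m ≠ 0)
    (hm : m < 2 * p) (hmp : m ≠ p) : padicValNat p m = 0 := by
  refine padicValNat.eq_zero_of_not_dvd ?_
  rintro ⟨c, rfl⟩
  have : c < 2 := by nlinarith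
  interval_cases c <;> simp_all

lemma sum_mul_padicValNat_le_sup {p n r : ℕ} [Fact p.Prime] (hn : n < 2 * p)
    (s : Fin r → ℕ) {k : Fin r → Fin n} (hk : Function.Injective k) :
    ∑ i, s i * padicValNat p ((k i : ℕ) + 1) ≤ univ.sup s := by
  have hvanish : ∀ i, (k i : ℕ) + 1 ≠ p → padicValNat p ((k i : ℕ) + 1) = 0 := fun i hi =>
    padicValNat_eq_zero_of_lt_two_mul (by omega) (by omega) hi
  by_cases hj : ∃ j, (k j : ℕ) + 1 = p
  · obtain ⟨j, hj⟩ := hj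
    rw [sum_eq_single j (fun i _ hij => ?_) (absurd (mem_univ j)), hj, padicValNat_self,
      mul_one]
    · exact le_sup (mem_univ j)
    · rw [hvanish i fun hi => hij (hk (Fin.ext (by omega))), mul_zero]
  · push Not at hj
    simp [hvanish _ (hj _)]

lemma neg_sup_le_padicValRat_mhsTerm_cons {p n r : ℕ} [Fact p.Prime] (hn : n < 2 * p)
    (s₁ : ℕ) (s : Fin r → ℕ) {k : Fin (r + 1) → Fin n} (hk : StrictMono k)
    (hk0 : (k 0 : ℕ) + 1 ≠ p) :
    -((univ.sup s : ℕ) : ℤ) ≤ padicValRat p (mhsTerm (Fin.cons s₁ s) k) := by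
  have htail := sum_mul_padicValNat_le_sup hn s (hk.injective.comp (Fin.succ_injective r))
  rw [padicValRat_mhsTerm, Fin.sum_univ_succ]
  simp only [Fin.cons_zero, Fin.cons_succ, Function.comp_apply,
    padicValNat_eq_zero_of_lt_two_mul (by omega) (by omega) hk0] at htail ⊢
  omega

lemma sum_mhsTerm_cons_filter_head_eq (n r s₁ : ℕ) (s : Fin r → ℕ) (j : Fin n) :
    ∑ k ∈ (univ.filter fun k : Fin (r + 1) → Fin n => ∀ a b, a < b → k a < k b).filter
        (fun k => k 0 = j), mhsTerm (Fin.cons s₁ s) k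
      = 1 / (((j : ℕ) + 1 : ℕ) : ℚ) ^ s₁ * cval n r s (j + 1) := by
  rw [cval, mul_sum]
  refine sum_nbij' Fin.tail (Fin.cons (α := fun _ => Fin n) j)
    (fun k hk => ?_) (fun k hk => ?_) (fun k hk => ?_) (fun k _ => Fin.tail_cons _ _)
    (fun k hk => ?_)
  · simp only [mem_filter, mem_univ, true_and] at hk ⊢
    have hmono : StrictMono (Fin.cons j (Fin.tail k)) := by
      rw [← hk.2, Fin.cons_self_tail]
      exact fun a b h => hk.1 a b h
    obtain ⟨hhead, htail⟩ := Fin.strictMono_cons.1 hmono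
    exact ⟨fun a b h => htail h, hhead⟩
  · simp only [mem_filter, mem_univ, true_and] at hk ⊢
    exact ⟨fun a b h => Fin.strictMono_cons.2 ⟨hk.2, fun a b h => hk.1 a b h⟩ h, rfl⟩
  · rw [← (mem_filter.1 hk).2]
    exact Fin.cons_self_tail k
  · simp only [mem_filter] at hk
    rw [mhsTerm_cons, hk.2, Nat.cast_add_one]
    rfl

lemma cval_pos_s11 {n r : ℕ} (s : Fin r → ℕ) {k : ℕ} (hk : k + r ≤ n) : 0 < cval n r s k := by
  refine sum_pos (fun kk _ => mhsTerm_pos s kk) ⟨fun i => ⟨k + i, by omega⟩, ?_⟩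
  simp only [mem_filter, mem_univ, true_and]
  exact ⟨fun i j hij => by simpa using hij, fun i => by simp⟩

lemma padicValRat_add_sum_of_lt {p : ℕ} [Fact p.Prime] {ι : Type*} {x : ℚ} {s : Finset ι}
    {F : ι → ℚ} (hx : 0 < x) (hF : ∀ i ∈ s, 0 < F i)
    (hv : ∀ i ∈ s, padicValRat p x < padicValRat p (F i)) :
    padicValRat p (x + ∑ i ∈ s, F i) = padicValRat p x := by
  induction s using Finset.cons_induction with
  | empty => simp
  | cons a s ha ih =>
    simp only [mem_cons, forall_eq_or_imp] at hF hv
    have hpos : 0 < x + ∑ i ∈ s, F i :=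
      add_pos_of_pos_of_nonneg hx (sum_nonneg fun i hi => (hF.2 i hi).le)
    rw [sum_cons, add_left_comm, add_comm, padicValRat.add_eq_of_lt (by linarith [hF.1])
      hpos.ne' hF.1.ne' (by rw [ih hF.2 hv.2]; exact hv.1), ih hF.2 hv.2]

theorem mhs_not_integer_of_exponent_gt_general (r n p : ℕ)
    (s' : Fin r → ℕ)
    (hp : p.Prime) (hp1 : (n : ℚ) / 2 < (p : ℚ)) (hp2 : p ≤ n - r)
    (s₁ : ℕ)
    (hbound : padicValRat p (cval n r s' p) + ((Finset.univ.sup s' : ℕ) : ℤ) < (s₁ : ℤ)) :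
    ¬∃ m : ℤ, mhs n (r + 1) (Fin.cons s₁ s') = (m : ℚ) := by
  rintro ⟨m, hm⟩
  have : Fact p.Prime := ⟨hp⟩
  have hn : n < 2 * p := by exact_mod_cast (by linarith : (n : ℚ) < 2 * p)
  have hpr : p + r ≤ n := by have := hp.two_le; omega
  let j : Fin n := ⟨p - 1, by omega⟩
  have hj : (j : ℕ) + 1 = p := Nat.sub_add_cancel hp.one_le
  have hp0 : (0 : ℚ) < p := by exact_mod_cast hp.pos
  have hc := cval_pos_s11 s' hpr
  have hhead : padicValRat p (1 / (p : ℚ) ^ s₁ * cval n r s' p)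
      = -s₁ + padicValRat p (cval n r s' p) := by
    rw [padicValRat.mul (by positivity) hc.ne', one_div, padicValRat.self_pow_inv]
  have hval : padicValRat p (mhs n (r + 1) (Fin.cons s₁ s'))
      = -s₁ + padicValRat p (cval n r s' p) := by
    rw [mhs_eq_sum_mhsTerm, ← sum_filter_add_sum_filter_not _ (fun k => k 0 = j),
      sum_mhsTerm_cons_filter_head_eq, hj, ← hhead]
    refine padicValRat_add_sum_of_lt (mul_pos (by positivity) hc) (fun k _ => mhsTerm_pos _ k)
      fun k hk => ?_
    simp only [mem_filter, mem_univ, true_and] at hk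
    have := neg_sup_le_padicValRat_mhsTerm_cons hn s₁ s' (fun a b h => hk.1 a b h)
      fun h => hk.2 (Fin.ext (by omega))
    rw [hhead]
    omega
  rw [hm, padicValRat.of_int] at hval
  omega

/-- Let the full length be `r + 1` with `2 ≤ r + 1 < n`. Suppose `p` is a prime with
`n/2 < p ≤ n − (r+1) + 1 = n − r` which is the largest prime `≤ n − r`. Then for every
positive integer `s₁ > ν_p(c_p) + max_i s_i`, the multiple harmonic sum
`H_n(s₁, s₂, …, s_{r+1})` is not an integer. -/
theorem mhs_not_integer_of_exponent_gt (r n p : ℕ) (hr : 1 ≤ r) (hn : r + 2 ≤ n)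
    (s' : Fin r → ℕ) (hs' : ∀ i, 0 < s' i)
    (hp : p.Prime) (hp1 : (n : ℚ) / 2 < (p : ℚ)) (hp2 : p ≤ n - r)
    (hpmax : ∀ q : ℕ, q.Prime → q ≤ n - r → q ≤ p)
    (s₁ : ℕ) (hs₁ : 0 < s₁)
    (hbound : padicValRat p (cval n r s' p) + ((Finset.univ.sup s' : ℕ) : ℤ) < (s₁ : ℤ)) :
    ¬∃ m : ℤ, mhs n (r + 1) (Fin.cons s₁ s') = (m : ℚ) :=
  mhs_not_integer_of_exponent_gt_general r n p s' hp hp1 hp2 s₁ hbound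
end
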